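/- Let G = (V_s, V_p, E) be a bipartite graph and let w : E → {1,…,k} be a decomposition of size k satisfying the HUB-rule. Then G has an overlap labeling of length 2^k − 1; in particular r(G) ≤ 2^k − 1. -/

import Mathlib

namespace Readability

/-- `x` overlaps `y` by `i`: `1 ≤ i ≤ min |x| |y|` and the length-`i` suffix of `x`
equals the length-`i` prefix of `y`. -/
def OverlapsBy {α : Type*} (x y : List α) (i : ℕ) : Prop :=
  1 ≤ i ∧ i ≤ min x.length y.length ∧ x.drop (x.length - i) = y.take i

/-- `ov x y`: the minimum `i` such that `x` overlaps `y` by `i`, or `0` if none exists. -/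
noncomputable def ov {α : Type*} (x y : List α) : ℕ := sInf {i | OverlapsBy x y i}

/-- An overlap labeling of length `r` of the bipartite graph with parts `Vs`, `Vp` and
edge relation `E ⊆ Vs × Vp`. -/
def IsOverlapLabeling {α Vs Vp : Type*} (E : Vs → Vp → Prop) (r : ℕ)
    (ls : Vs → List α) (lp : Vp → List α) : Prop :=
  (∀ u, (ls u).length = r) ∧ (∀ v, (lp v).length = r) ∧
    ∀ u v, E u v ↔ ∃ i, OverlapsBy (ls u) (lp v) i

/-- Bipartite readability: the least `r` admitting an overlap labeling of length `r`
(over the alphabet `ℕ`). -/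
noncomputable def bReadability {Vs Vp : Type*} (E : Vs → Vp → Prop) : ℕ :=
  sInf {r | ∃ (ls : Vs → List ℕ) (lp : Vp → List ℕ), IsOverlapLabeling E r ls lp}

/-- An injective overlap labeling of length `r` of the digraph with arc relation `A`. -/
def IsInjOverlapLabeling {V : Type*} (A : V → V → Prop) (r : ℕ) (ℓ : V → List ℕ) : Prop :=
  (∀ v, (ℓ v).length = r) ∧ Function.Injective ℓ ∧
    ∀ u v, A u v ↔ 0 < ov (ℓ u) (ℓ v) ∧ ov (ℓ u) (ℓ v) < r

/-- Digraph readability: the least `r` admitting an injective overlap labeling of length `r`. -/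
noncomputable def dReadability {V : Type*} (A : V → V → Prop) : ℕ :=
  sInf {r | ∃ ℓ : V → List ℕ, IsInjOverlapLabeling A r ℓ}

/-- A decomposition of size `k`: a weight function on edges with values in `{1,…,k}`. -/
def IsDecomposition {Vs Vp : Type*} (E : Vs → Vp → Prop) (k : ℕ) (w : Vs → Vp → ℕ) : Prop :=
  ∀ u v, E u v → 1 ≤ w u v ∧ w u v ≤ k

/-- An induced `P₄` with consecutive edges `(s1,p1), (s2,p1), (s2,p2)`. -/
def InducedP4 {Vs Vp : Type*} (E : Vs → Vp → Prop) (s1 s2 : Vs) (p1 p2 : Vp) : Prop :=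
  s1 ≠ s2 ∧ p1 ≠ p2 ∧ E s1 p1 ∧ E s2 p1 ∧ E s2 p2 ∧ ¬ E s1 p2

/-- The `P₄`-rule: on each induced `P₄`, if the middle edge has maximum weight then its weight
is at least the sum of the weights of the two outer edges. -/
def SatisfiesP4Rule {Vs Vp : Type*} (E : Vs → Vp → Prop) (w : Vs → Vp → ℕ) : Prop :=
  ∀ s1 s2 p1 p2, InducedP4 E s1 s2 p1 p2 →
    w s2 p1 = max (w s1 p1) (max (w s2 p1) (w s2 p2)) →
    w s1 p1 + w s2 p2 ≤ w s2 p1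

/-- The strict `P₄`-rule: as the `P₄`-rule, with strict inequality. -/
def SatisfiesStrictP4Rule {Vs Vp : Type*} (E : Vs → Vp → Prop) (w : Vs → Vp → ℕ) : Prop :=
  ∀ s1 s2 p1 p2, InducedP4 E s1 s2 p1 p2 →
    w s2 p1 = max (w s1 p1) (max (w s2 p1) (w s2 p2)) →
    w s1 p1 + w s2 p2 < w s2 p1

/-- `C₄`-freeness of a bipartite graph. -/
def C4Free {Vs Vp : Type*} (E : Vs → Vp → Prop) : Prop :=
  ∀ (s1 s2 : Vs) (p1 p2 : Vp), s1 ≠ s2 → p1 ≠ p2 →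
    ¬ (E s1 p1 ∧ E s1 p2 ∧ E s2 p1 ∧ E s2 p2)

/-- The subgraph `G_i` of a decomposition: edges of weight exactly `i`. -/
def SubAt {Vs Vp : Type*} (E : Vs → Vp → Prop) (w : Vs → Vp → ℕ) (i : ℕ) :
    Vs → Vp → Prop :=
  fun u v => E u v ∧ w u v = i

/-- A bipartite edge relation is a disjoint union of bicliques iff it has no induced `P₄`,
i.e. whenever `(s1,p1), (s2,p1), (s2,p2)` are edges, so is `(s1,p2)`. -/
def BicliqueUnion {Vs Vp : Type*} (H : Vs → Vp → Prop) : Prop :=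
  ∀ s1 s2 p1 p2, H s1 p1 → H s2 p1 → H s2 p2 → H s1 p2

/-- The HUB-rule for a decomposition `w`:
(i) every level graph `G_i` is a disjoint union of bicliques, and
(ii) non-isolated twins in `G_i` (for `i ≥ 2`) are twins in every `G_j` with `1 ≤ j ≤ i-1`
(stated for both parts of the bipartition). -/
def SatisfiesHUBRule {Vs Vp : Type*} (E : Vs → Vp → Prop) (w : Vs → Vp → ℕ) : Prop :=
  (∀ i, 1 ≤ i → BicliqueUnion (SubAt E w i)) ∧
  (∀ i, 2 ≤ i → ∀ u v : Vs, u ≠ v → (∃ p, SubAt E w i u p) →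
      (∀ p, SubAt E w i u p ↔ SubAt E w i v p) →
      ∀ j, 1 ≤ j → j ≤ i - 1 → ∀ p, SubAt E w j u p ↔ SubAt E w j v p) ∧
  (∀ i, 2 ≤ i → ∀ u v : Vp, u ≠ v → (∃ s, SubAt E w i s u) →
      (∀ s, SubAt E w i s u ↔ SubAt E w i s v) →
      ∀ j, 1 ≤ j → j ≤ i - 1 → ∀ s, SubAt E w j s u ↔ SubAt E w j s v)

/-- The HUB number: minimum size of a decomposition satisfying the HUB-rule. -/
noncomputable def hubNumber {Vs Vp : Type*} (E : Vs → Vp → Prop) : ℕ :=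
  sInf {k | ∃ w, IsDecomposition E k w ∧ SatisfiesHUBRule E w}

/-- The underlying undirected simple graph on `Vs ⊕ Vp` of a bipartite graph. -/
def underlyingGraph {Vs Vp : Type*} (E : Vs → Vp → Prop) : SimpleGraph (Vs ⊕ Vp) where
  Adj x y := (∃ u v, x = Sum.inl u ∧ y = Sum.inr v ∧ E u v) ∨
    (∃ u v, x = Sum.inr v ∧ y = Sum.inl u ∧ E u v)
  symm := by
    constructor
    rintro x y (⟨u, v, rfl, rfl, h⟩ | ⟨u, v, rfl, rfl, h⟩)
    · exact Or.inr ⟨u, v, rfl, rfl, h⟩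
    · exact Or.inl ⟨u, v, rfl, rfl, h⟩
  loopless := by
    constructor
    rintro x (⟨u, v, h1, h2, -⟩ | ⟨u, v, h1, h2, -⟩) <;> subst h1 <;> simp_all

/-- The radius of a graph: the least `r` such that some vertex has eccentricity at most `r`
(for a finite connected graph this is `min_u max_v dist(u,v)`). -/
noncomputable def graphRadius {V : Type*} (G : SimpleGraph V) : ℕ :=
  sInf {r | ∃ u, ∀ v, G.dist u v ≤ r}

/-- Distinctness of two vertices `u, v` of the same part (here the `Vs`-part, with
neighborhoods taken in `Vp`): `max(|N(u)∖N(v)|, |N(v)∖N(u)|)`. -/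
noncomputable def DTpair {Vs Vp : Type*} (E : Vs → Vp → Prop) (u v : Vs) : ℕ :=
  max {p : Vp | E u p ∧ ¬ E v p}.ncard {p : Vp | E v p ∧ ¬ E u p}.ncard

/-- Distinctness of a bipartite graph: the minimum of `DT(u,v)` over pairs of distinct
vertices in the same part. -/
noncomputable def distinctness {Vs Vp : Type*} (E : Vs → Vp → Prop) : ℕ :=
  sInf ({d | ∃ u v : Vs, u ≠ v ∧ d = DTpair E u v} ∪
        {d | ∃ u v : Vp, u ≠ v ∧ d = DTpair (fun p s => E s p) u v})

/-- A bipartite graph fails to be a matching iff some vertex has degree at least 2. -/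
def NotMatching {Vs Vp : Type*} (E : Vs → Vp → Prop) : Prop :=
  (∃ u : Vs, ∃ p1 p2 : Vp, p1 ≠ p2 ∧ E u p1 ∧ E u p2) ∨
  (∃ p : Vp, ∃ u1 u2 : Vs, u1 ≠ u2 ∧ E u1 p ∧ E u2 p)


/-! Build labels `S_i(u)`, `P_i(v)` of length `2 ^ i - 1` level by level:
`S_{i+1}(u) = P_i(v) σ(u) S_i(u)` for any `G_{i+1}`-neighbour `v` of `u`, and
`P_{i+1}(v) = P_i(v) σ'(v) S_i(u)` for any `G_{i+1}`-neighbour `u` of `v`, where the middle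
letters `σ(u) = σ'(v)` name the biclique of `G_{i+1}` containing the edge. The HUB-rule makes
the `G_{i+1}`-neighbours of a vertex twins at all lower levels, so the choices do not matter and
`S_{i+1}(u) = P_{i+1}(v)` for every edge of `G_{i+1}`. Every letter also records its level; the
levels form the ruler sequence `1 2 1 3 1 2 1 …`, whose self-overlaps all have length
`2 ^ i - 1`, so any overlap of `S_k(u)` with `P_k(v)` is an equality `S_i(u) = P_i(v)`, which
forces the middle letters to agree and `(u, v)` to be an edge of `G_i`. -/

def ruler : ℕ → List ℕ
  | 0 => []
  | k + 1 => ruler k ++ (k + 1) :: ruler k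

theorem length_ruler (k : ℕ) : (ruler k).length = 2 ^ k - 1 := by
  induction k with
  | zero => rfl
  | succ k ih =>
    have := k.one_le_two_pow
    simp only [ruler, List.length_append, List.length_cons, ih, pow_succ]
    omega

theorem le_of_mem_ruler {k t : ℕ} (h : t ∈ ruler k) : t ≤ k := by
  induction k with
  | zero => simp [ruler] at h
  | succ k ih =>
    simp only [ruler, List.mem_append, List.mem_cons] at h
    rcases h with h | rfl | h <;> grind

theorem OverlapsBy.map {α β : Type*} (f : α → β) {x y : List α} {i : ℕ}
    (h : OverlapsBy x y i) : OverlapsBy (x.map f) (y.map f) i := by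
  obtain ⟨h1, h2, h3⟩ := h
  exact ⟨h1, by simpa using h2,
    by simp only [List.length_map, ← List.map_drop, ← List.map_take, h3]⟩

theorem overlapsBy_map_iff {α β : Type*} {f : α → β} (hf : f.Injective) {x y : List α}
    {i : ℕ} : OverlapsBy (x.map f) (y.map f) i ↔ OverlapsBy x y i := by
  simp only [OverlapsBy, List.length_map, ← List.map_drop, ← List.map_take,
    (List.map_injective_iff.mpr hf).eq_iff]

theorem OverlapsBy.of_isSuffix_of_isPrefix {α : Type*} {x y z : List α} (hx : z <:+ x)
    (hy : z <+: y) (hz : z ≠ []) : OverlapsBy x y z.length :=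
  ⟨List.length_pos_iff.mpr hz, le_min hx.length_le hy.length_le,
    (List.suffix_iff_eq_drop.mp hx).symm.trans (List.prefix_iff_eq_take.mp hy)⟩

/-- An overlap reaching into the middle letter `k + 1` of `ruler (k + 1)`, which occurs there only
once, must align its two occurrences. -/
theorem exists_eq_two_pow_sub_one_of_overlapsBy_ruler {k j : ℕ}
    (h : OverlapsBy (ruler k) (ruler k) j) : ∃ i ≤ k, j = 2 ^ i - 1 := by
  induction k with
  | zero => simp [OverlapsBy, ruler] at h; omega
  | succ k ih =>
    obtain ⟨hj1, hj2, hdt⟩ := h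
    have hpow : 2 ^ (k + 1) - 1 = 2 * (2 ^ k - 1) + 1 := by have := k.one_le_two_pow; omega
    simp only [ruler, List.length_append, List.length_cons, min_self] at hj2 hdt
    set R := ruler k
    have hn : R.length = 2 ^ k - 1 := length_ruler k
    by_cases hjn : j ≤ R.length
    · rw [show R.length + (R.length + 1) - j = R.length + (R.length - j + 1) by omega,
        List.drop_length_add_append, List.drop_succ_cons, List.take_append_of_le_length hjn] at hdt
      obtain ⟨i, hik, rfl⟩ := ih ⟨hj1, by simpa using hjn, hdt⟩
      exact ⟨i, by omega, rfl⟩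
    · have hnotin : k + 1 ∉ R := fun h => by have := le_of_mem_ruler h; omega
      rw [List.drop_append_of_le_length (by omega), List.take_append,
        List.take_of_length_le (by omega), show j - R.length = j - R.length - 1 + 1 by omega,
        List.take_succ_cons, List.append_cons_inj_of_notMem
          (fun h => hnotin (List.mem_of_mem_drop h)) hnotin] at hdt
      have := congrArg List.length hdt.1
      simp only [List.length_drop] at this
      exact ⟨k + 1, le_rfl, by omega⟩

open scoped Classical in
noncomputable def applySome {X Y : Type*} (f : X → Y) (s : Set X) (d : Y) : Y :=
  if h : s.Nonempty then f h.some else d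

theorem applySome_eq {X Y : Type*} {f : X → Y} {s : Set X} {x : X} (d : Y) (hx : x ∈ s)
    (hf : ∀ y ∈ s, f y = f x) : applySome f s d = f x := by
  have hs : s.Nonempty := ⟨x, hx⟩
  rw [applySome, dif_pos hs, hf _ hs.some_mem]

theorem applySome_mem {X Y : Type*} {f : X → Y} {s : Set X} {d : Y} {t : Set Y}
    (hf : ∀ x, f x ∈ t) (hd : d ∈ t) : applySome f s d ∈ t := by
  unfold applySome; split_ifs <;> simp only [*]

section Labels

variable {Vs Vp : Type*} (E : Vs → Vp → Prop) (w : Vs → Vp → ℕ)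

def sSymbol (i : ℕ) (u : Vs) : ℕ × Option (Set Vp) :=
  (i, some {v | SubAt E w i u v})

open scoped Classical in
/-- An isolated vertex gets `none` rather than `some ∅`, so that it never matches an isolated
vertex of `Vs`. -/
noncomputable def pSymbol (i : ℕ) (v : Vp) : ℕ × Option (Set Vp) :=
  (i, if ∃ s, SubAt E w i s v then some {p | ∃ s, SubAt E w i s v ∧ SubAt E w i s p}
    else none)

/-- Stands in for a label of a missing neighbour; only its levels matter. -/
def blank (X : Type*) (i : ℕ) : List (ℕ × Option X) := (ruler i).map (·, none)

noncomputable def labels :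
    ℕ → (Vs → List (ℕ × Option (Set Vp))) × (Vp → List (ℕ × Option (Set Vp)))
  | 0 => (fun _ => [], fun _ => [])
  | i + 1 =>
    (fun u => applySome (labels i).2 {v | SubAt E w (i + 1) u v} (blank (Set Vp) i)
        ++ sSymbol E w (i + 1) u :: (labels i).1 u,
      fun v => (labels i).2 v ++ pSymbol E w (i + 1) v
        :: applySome (labels i).1 {u | SubAt E w (i + 1) u v} (blank (Set Vp) i))

noncomputable def sLabel (i : ℕ) : Vs → List (ℕ × Option (Set Vp)) := (labels E w i).1

noncomputable def pLabel (i : ℕ) : Vp → List (ℕ × Option (Set Vp)) := (labels E w i).2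

theorem sLabel_succ (i : ℕ) (u : Vs) : sLabel E w (i + 1) u =
    applySome (pLabel E w i) {v | SubAt E w (i + 1) u v} (blank (Set Vp) i)
      ++ sSymbol E w (i + 1) u :: sLabel E w i u := rfl

theorem pLabel_succ (i : ℕ) (v : Vp) : pLabel E w (i + 1) v =
    pLabel E w i v ++ pSymbol E w (i + 1) v
      :: applySome (sLabel E w i) {u | SubAt E w (i + 1) u v} (blank (Set Vp) i) := rfl

theorem map_fst_sLabel_and_pLabel (i : ℕ) :
    (∀ u, (sLabel E w i u).map Prod.fst = ruler i) ∧
      ∀ v, (pLabel E w i v).map Prod.fst = ruler i := by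
  induction i with
  | zero => exact ⟨fun _ => rfl, fun _ => rfl⟩
  | succ i ih =>
    have hblank : (blank (Set Vp) i).map Prod.fst = ruler i := by simp [blank, Function.comp_def]
    refine ⟨fun u => ?_, fun v => ?_⟩
    · have := applySome_mem (s := {v | SubAt E w (i + 1) u v})
        (t := {l : List (ℕ × Option (Set Vp)) | l.map Prod.fst = ruler i}) ih.2 hblank
      simp_all [sLabel_succ, ruler, sSymbol]
    · have := applySome_mem (s := {u | SubAt E w (i + 1) u v})
        (t := {l : List (ℕ × Option (Set Vp)) | l.map Prod.fst = ruler i}) ih.1 hblank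
      simp_all [pLabel_succ, ruler, pSymbol]

theorem length_sLabel (i : ℕ) (u : Vs) : (sLabel E w i u).length = 2 ^ i - 1 := by
  rw [← length_ruler, ← (map_fst_sLabel_and_pLabel E w i).1 u, List.length_map]

theorem length_pLabel (i : ℕ) (v : Vp) : (pLabel E w i v).length = 2 ^ i - 1 := by
  rw [← length_ruler, ← (map_fst_sLabel_and_pLabel E w i).2 v, List.length_map]

theorem sLabel_isSuffix (u : Vs) {i k : ℕ} (h : i ≤ k) : sLabel E w i u <:+ sLabel E w k u := by
  induction k, h using Nat.le_induction with
  | base => exact List.suffix_refl _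
  | succ k _ ih =>
    exact ih.trans (sLabel_succ E w k u ▸ (List.suffix_cons _ _).trans (List.suffix_append _ _))

theorem pLabel_isPrefix (v : Vp) {i k : ℕ} (h : i ≤ k) : pLabel E w i v <+: pLabel E w k v := by
  induction k, h using Nat.le_induction with
  | base => exact List.prefix_refl _
  | succ k _ ih => exact ih.trans (pLabel_succ E w k v ▸ List.prefix_append _ _)

theorem sLabel_congr {m : ℕ} {u u' : Vs}
    (h : ∀ j, 1 ≤ j → j ≤ m → ∀ p, SubAt E w j u p ↔ SubAt E w j u' p) :
    sLabel E w m u = sLabel E w m u' := by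
  induction m with
  | zero => rfl
  | succ m ih =>
    simp only [sLabel_succ, sSymbol, h (m + 1) (by omega) le_rfl,
      ih fun j hj hjm => h j hj (by omega)]

theorem pLabel_congr {m : ℕ} {v v' : Vp}
    (h : ∀ j, 1 ≤ j → j ≤ m → ∀ s, SubAt E w j s v ↔ SubAt E w j s v') :
    pLabel E w m v = pLabel E w m v' := by
  classical
  induction m with
  | zero => rfl
  | succ m ih =>
    simp only [pLabel_succ, pSymbol, h (m + 1) (by omega) le_rfl,
      ih fun j hj hjm => h j hj (by omega)]

end Labels

section Bicliques

variable {Vs Vp : Type*} {H : Vs → Vp → Prop}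

theorem BicliqueUnion.twins_right (hB : BicliqueUnion H) {u : Vs} {v v' : Vp} (h : H u v)
    (h' : H u v') (s : Vs) : H s v ↔ H s v' :=
  ⟨fun hs => hB s u v v' hs h h', fun hs => hB s u v' v hs h' h⟩

theorem BicliqueUnion.twins_left (hB : BicliqueUnion H) {u u' : Vs} {v : Vp} (h : H u v)
    (h' : H u' v) (p : Vp) : H u p ↔ H u' p :=
  ⟨fun hp => hB u' u v p h' h hp, fun hp => hB u u' v p h h' hp⟩

theorem BicliqueUnion.setOf_rel_eq (hB : BicliqueUnion H) {u : Vs} {v : Vp} (h : H u v) :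
    {p | H u p} = {p | ∃ s, H s v ∧ H s p} :=
  Set.ext fun p => ⟨fun hp => ⟨u, h, hp⟩, fun ⟨_, hs, hsp⟩ => hB u _ v p h hs hsp⟩

end Bicliques

section HUB

variable {Vs Vp : Type*} {E : Vs → Vp → Prop} {w : Vs → Vp → ℕ}

theorem sSymbol_eq_pSymbol {i : ℕ} (hB : BicliqueUnion (SubAt E w i)) {u : Vs} {v : Vp}
    (h : SubAt E w i u v) : sSymbol E w i u = pSymbol E w i v := by
  simp only [sSymbol, pSymbol, if_pos (⟨u, h⟩ : ∃ s, SubAt E w i s v), hB.setOf_rel_eq h]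

theorem subAt_of_sSymbol_eq_pSymbol {i : ℕ} {u : Vs} {v : Vp}
    (h : sSymbol E w i u = pSymbol E w i v) : SubAt E w i u v := by
  simp only [sSymbol, pSymbol, Prod.mk.injEq, true_and] at h
  split_ifs at h with hv
  obtain ⟨s, hs⟩ := hv
  show v ∈ {p | SubAt E w i u p}
  rw [Option.some_inj.mp h]
  exact ⟨s, hs, hs⟩

theorem SatisfiesHUBRule.pLabel_eq (hH : SatisfiesHUBRule E w) {i : ℕ} {u : Vs} {v v' : Vp}
    (h : SubAt E w (i + 1) u v) (h' : SubAt E w (i + 1) u v') :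
    pLabel E w i v = pLabel E w i v' := by
  rcases eq_or_ne v v' with rfl | hne
  · rfl
  refine pLabel_congr E w fun j hj hji => ?_
  exact hH.2.2 (i + 1) (by omega) v v' hne ⟨u, h⟩ ((hH.1 (i + 1) (by omega)).twins_right h h')
    j hj (by omega)

theorem SatisfiesHUBRule.sLabel_eq (hH : SatisfiesHUBRule E w) {i : ℕ} {u u' : Vs} {v : Vp}
    (h : SubAt E w (i + 1) u v) (h' : SubAt E w (i + 1) u' v) :
    sLabel E w i u = sLabel E w i u' := by
  rcases eq_or_ne u u' with rfl | hne
  · rfl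
  refine sLabel_congr E w fun j hj hji => ?_
  exact hH.2.1 (i + 1) (by omega) u u' hne ⟨v, h⟩ ((hH.1 (i + 1) (by omega)).twins_left h h')
    j hj (by omega)

theorem SatisfiesHUBRule.sLabel_eq_pLabel (hH : SatisfiesHUBRule E w) {i : ℕ} {u : Vs}
    {v : Vp} (h : SubAt E w (i + 1) u v) : sLabel E w (i + 1) u = pLabel E w (i + 1) v := by
  simp only [sLabel_succ, pLabel_succ]
  rw [applySome_eq (s := {v | SubAt E w (i + 1) u v}) _ h fun v' h' => hH.pLabel_eq h' h,
    applySome_eq (s := {u | SubAt E w (i + 1) u v}) _ h fun u' h' => hH.sLabel_eq h' h,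
    sSymbol_eq_pSymbol (hH.1 (i + 1) (by omega)) h]

theorem subAt_of_sLabel_eq_pLabel {i : ℕ} {u : Vs} {v : Vp}
    (h : sLabel E w (i + 1) u = pLabel E w (i + 1) v) : SubAt E w (i + 1) u v := by
  simp only [sLabel_succ, pLabel_succ] at h
  have hlen : (applySome (pLabel E w i) {v | SubAt E w (i + 1) u v} (blank (Set Vp) i)).length
      = (pLabel E w i v).length := by
    rw [length_pLabel]
    exact applySome_mem (t := {l : List (ℕ × Option (Set Vp)) | l.length = 2 ^ i - 1})
      (length_pLabel E w i) (by simp [blank, length_ruler])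
  exact subAt_of_sSymbol_eq_pSymbol (List.cons.inj (List.append_inj h hlen).2).1

end HUB

theorem IsOverlapLabeling.map {α β Vs Vp : Type*} {E : Vs → Vp → Prop} {r : ℕ}
    {ls : Vs → List α} {lp : Vp → List α} (h : IsOverlapLabeling E r ls lp) {f : α → β}
    (hf : f.Injective) : IsOverlapLabeling E r (fun u => (ls u).map f) (fun v => (lp v).map f) :=
  ⟨fun u => by simp [h.1], fun v => by simp [h.2.1], fun u v => by
    simp only [overlapsBy_map_iff hf, h.2.2]⟩

section Labeling

variable {Vs Vp : Type*} {E : Vs → Vp → Prop} {w : Vs → Vp → ℕ} {k : ℕ}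

theorem SatisfiesHUBRule.overlapsBy_of_subAt (hH : SatisfiesHUBRule E w) {i : ℕ} {u : Vs}
    {v : Vp} (hik : i + 1 ≤ k) (h : SubAt E w (i + 1) u v) :
    OverlapsBy (sLabel E w k u) (pLabel E w k v) (2 ^ (i + 1) - 1) := by
  have hne : sLabel E w (i + 1) u ≠ [] := by
    rw [← List.length_pos_iff, length_sLabel]
    have := Nat.one_lt_two_pow (n := i + 1) (by omega)
    omega
  have := OverlapsBy.of_isSuffix_of_isPrefix (sLabel_isSuffix E w u hik)
    (hH.sLabel_eq_pLabel h ▸ pLabel_isPrefix E w v hik) hne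
  rwa [length_sLabel] at this

theorem exists_subAt_of_overlapsBy {u : Vs} {v : Vp} {j : ℕ}
    (h : OverlapsBy (sLabel E w k u) (pLabel E w k v) j) : ∃ i, SubAt E w (i + 1) u v := by
  have hruler := h.map Prod.fst
  rw [(map_fst_sLabel_and_pLabel E w k).1 u, (map_fst_sLabel_and_pLabel E w k).2 v] at hruler
  obtain ⟨i, hik, rfl⟩ := exists_eq_two_pow_sub_one_of_overlapsBy_ruler hruler
  obtain ⟨i, rfl⟩ : ∃ i', i = i' + 1 :=
    Nat.exists_eq_succ_of_ne_zero (by rintro rfl; simp [OverlapsBy] at h)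
  have hS := List.suffix_iff_eq_drop.mp (sLabel_isSuffix E w u hik)
  have hP := List.prefix_iff_eq_take.mp (pLabel_isPrefix E w v hik)
  rw [length_sLabel E w (i + 1)] at hS
  rw [length_pLabel] at hP
  exact ⟨i, subAt_of_sLabel_eq_pLabel (hS.trans (h.2.2.trans hP.symm))⟩

theorem SatisfiesHUBRule.isOverlapLabeling (hH : SatisfiesHUBRule E w)
    (hw : IsDecomposition E k w) :
    IsOverlapLabeling E (2 ^ k - 1) (sLabel E w k) (pLabel E w k) := by
  refine ⟨length_sLabel E w k, length_pLabel E w k, fun u v => ⟨fun huv => ?_, ?_⟩⟩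
  · obtain ⟨hw1, hwk⟩ := hw u v huv
    obtain ⟨i, hi⟩ : ∃ i, w u v = i + 1 := ⟨w u v - 1, by omega⟩
    exact ⟨_, hH.overlapsBy_of_subAt (hi ▸ hwk) ⟨huv, hi⟩⟩
  · rintro ⟨j, hj⟩
    obtain ⟨i, huv, -⟩ := exists_subAt_of_overlapsBy hj
    exact huv

end Labeling

theorem statement10_general {Vs Vp : Type*} [Fintype Vp] (E : Vs → Vp → Prop)
    (k : ℕ) (w : Vs → Vp → ℕ) (hw : IsDecomposition E k w) (hH : SatisfiesHUBRule E w) :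
    (∃ (ls : Vs → List ℕ) (lp : Vp → List ℕ), IsOverlapLabeling E (2 ^ k - 1) ls lp) ∧
      bReadability E ≤ 2 ^ k - 1 := by
  obtain ⟨f, hf⟩ := exists_injective_nat (ℕ × Option (Set Vp))
  have h := (hH.isOverlapLabeling hw).map hf
  exact ⟨⟨_, _, h⟩, Nat.sInf_le ⟨_, _, h⟩⟩

/-- If `w : E → {1,…,k}` is a decomposition of a bipartite graph `G` satisfying
the HUB-rule, then `G` has an overlap labeling of length `2^k − 1`; in particular
`r(G) ≤ 2^k − 1`. -/
theorem statement10 {Vs Vp : Type*} [Fintype Vs] [Fintype Vp] (E : Vs → Vp → Prop)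
    (k : ℕ) (w : Vs → Vp → ℕ) (hw : IsDecomposition E k w) (hH : SatisfiesHUBRule E w) :
    (∃ (ls : Vs → List ℕ) (lp : Vp → List ℕ), IsOverlapLabeling E (2 ^ k - 1) ls lp) ∧
      bReadability E ≤ 2 ^ k - 1 :=
  statement10_general E k w hw hH

end Readability
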